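/- arXiv:1801.02309 — 3 statements merged into one kernel-verified Lean document; each statement's English description precedes it below -/
import Mathlib

section
/- Let f : ℝ^d → ℝ be m-strongly convex and L-smooth with minimizer x* and f(x*) = 0, and let Π be the probability measure with density π(x) ∝ e^{−f(x)}. Let μ* be the Gaussian measure N(x*, L^{−1} I_d). Then for every measurable set A, μ*(A) ≤ κ^{d/2} Π(A), where κ = L/m. -/
/-!
Since `x*` minimises `f` and `f x* = 0`, the gradient vanishes there, and the two defining
inequalities at `x*` sandwich `f` between the quadratics `m/2 ‖x - x*‖²` and `L/2 ‖x - x*‖²`.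
The upper one gives `e^{-L/2 ‖x - x*‖²} ≤ e^{-f x}`, and integrating the lower one bounds the
normalising constant by the Gaussian integral `∫ e^{-f} ≤ (2π/m)^{d/2}`. Together these bound the
density of `μ*` pointwise by `(L/m)^{d/2}` times that of `Π`.
-/

open MeasureTheory Real
open scoped RealInnerProductSpace

theorem IsLocalMin.gradient_eq_zero {V : Type*} [NormedAddCommGroup V] [InnerProductSpace ℝ V]
    [CompleteSpace V] {f : V → ℝ} {x : V} (h : IsLocalMin f x) : gradient f x = 0 := by
  simp [gradient, h.fderiv_eq_zero]

theorem MeasureTheory.withDensity_ofReal_le_ofReal_mul {α : Type*} [MeasurableSpace α]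
    {μ : Measure α} {g h : α → ℝ} {c : ℝ} (hc : 0 ≤ c) (hgh : ∀ x, g x ≤ c * h x) (s : Set α) :
    μ.withDensity (fun x => ENNReal.ofReal (g x)) s
      ≤ ENNReal.ofReal c * μ.withDensity (fun x => ENNReal.ofReal (h x)) s := by
  calc μ.withDensity (fun x => ENNReal.ofReal (g x)) s
      ≤ μ.withDensity (ENNReal.ofReal c • fun x => ENNReal.ofReal (h x)) s := by
        refine withDensity_mono (ae_of_all _ fun x => ?_) s
        simpa [ENNReal.ofReal_mul hc] using ENNReal.ofReal_le_ofReal (hgh x)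
    _ = ENNReal.ofReal c * μ.withDensity (fun x => ENNReal.ofReal (h x)) s := by
        rw [withDensity_smul' _ _ ENNReal.ofReal_ne_top]
        rfl

section Gaussian

variable {V : Type*} [NormedAddCommGroup V] [InnerProductSpace ℝ V] [FiniteDimensional ℝ V]
  [MeasurableSpace V] [BorelSpace V]

theorem integral_exp_neg_mul_norm_sub_sq {b : ℝ} (hb : 0 < b) (c : V) :
    ∫ v : V, exp (-b * ‖v - c‖ ^ 2) = (π / b) ^ (Module.finrank ℝ V / 2 : ℝ) := by
  rw [integral_sub_right_eq_self (fun v => exp (-b * ‖v‖ ^ 2)) c,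
    GaussianFourier.integral_rexp_neg_mul_sq_norm hb]

theorem integrable_exp_neg_mul_norm_sub_sq {b : ℝ} (hb : 0 < b) (c : V) :
    Integrable fun v : V => exp (-b * ‖v - c‖ ^ 2) :=
  Integrable.of_integral_ne_zero <| by
    rw [integral_exp_neg_mul_norm_sub_sq hb]
    positivity

variable {f : V → ℝ} {c : V} {a : ℝ}

theorem integrable_exp_neg_of_quadratic_le (ha : 0 < a) (hf : AEStronglyMeasurable f)
    (hlo : ∀ y, a / 2 * ‖y - c‖ ^ 2 ≤ f y) : Integrable fun y => exp (-f y) := by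
  refine (integrable_exp_neg_mul_norm_sub_sq (half_pos ha) c).mono'
    (continuous_exp.comp_aestronglyMeasurable hf.neg) (ae_of_all _ fun y => ?_)
  rw [norm_of_nonneg (exp_pos _).le, exp_le_exp]
  linarith [hlo y]

theorem integral_exp_neg_le_of_quadratic_le (ha : 0 < a) (hf : AEStronglyMeasurable f)
    (hlo : ∀ y, a / 2 * ‖y - c‖ ^ 2 ≤ f y) :
    ∫ y, exp (-f y) ≤ (2 * π / a) ^ (Module.finrank ℝ V / 2 : ℝ) := by
  calc ∫ y, exp (-f y) ≤ ∫ y, exp (-(a / 2) * ‖y - c‖ ^ 2) :=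
        integral_mono (integrable_exp_neg_of_quadratic_le ha hf hlo)
          (integrable_exp_neg_mul_norm_sub_sq (half_pos ha) c)
          fun y => exp_le_exp.2 (by linarith [hlo y])
    _ = (2 * π / a) ^ (Module.finrank ℝ V / 2 : ℝ) := by
        rw [integral_exp_neg_mul_norm_sub_sq (half_pos ha), div_div_eq_mul_div, mul_comm]

theorem gaussian_density_le_mul_density_of_quadratic_bounds {m L : ℝ} (hm : 0 < m) (hL : 0 < L)
    (hf : AEStronglyMeasurable f) (hlo : ∀ y, m / 2 * ‖y - c‖ ^ 2 ≤ f y)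
    (hup : ∀ y, f y ≤ L / 2 * ‖y - c‖ ^ 2) (x : V) :
    (L / (2 * π)) ^ (Module.finrank ℝ V / 2 : ℝ) * exp (-(L / 2) * ‖x - c‖ ^ 2)
      ≤ (L / m) ^ (Module.finrank ℝ V / 2 : ℝ) * (exp (-f x) / ∫ y, exp (-f y)) := by
  set p : ℝ := Module.finrank ℝ V / 2
  have hZ_le := integral_exp_neg_le_of_quadratic_le hm hf hlo
  have hZ_pos : 0 < ∫ y, exp (-f y) :=
    integral_exp_pos (integrable_exp_neg_of_quadratic_le hm hf hlo)
  have hconst : (L / (2 * π)) ^ p = (L / m) ^ p / (2 * π / m) ^ p := by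
    rw [← div_rpow (by positivity) (by positivity)]
    congr 1
    field_simp
  calc (L / (2 * π)) ^ p * exp (-(L / 2) * ‖x - c‖ ^ 2)
      ≤ (L / (2 * π)) ^ p * exp (-f x) := by
        gcongr
        linarith [hup x]
    _ = (L / m) ^ p * (exp (-f x) / (2 * π / m) ^ p) := by
        rw [hconst]
        ring
    _ ≤ (L / m) ^ p * (exp (-f x) / ∫ y, exp (-f y)) := by gcongr

end Gaussian

/-- If `f` is `m`-strongly convex and `L`-smooth with minimizer `x*`, `f(x*) = 0`,
`Π` has density `∝ e^{-f}` and `μ* = N(x*, L⁻¹ I_d)`, then `μ*(A) ≤ κ^{d/2} Π(A)` for every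
measurable `A`, where `κ = L/m`. -/
theorem feasible_start_warmness (d : ℕ) (f : EuclideanSpace ℝ (Fin d) → ℝ)
    (m L : ℝ) (hm : 0 < m) (hmL : m ≤ L)
    (hdiff : Differentiable ℝ f)
    (hsc : ∀ x y : EuclideanSpace ℝ (Fin d),
      f x + ⟪gradient f x, y - x⟫ + m / 2 * ‖x - y‖ ^ 2 ≤ f y)
    (hsmooth : ∀ x y : EuclideanSpace ℝ (Fin d),
      f y ≤ f x + ⟪gradient f x, y - x⟫ + L / 2 * ‖x - y‖ ^ 2)
    (xs : EuclideanSpace ℝ (Fin d))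
    (hmin : ∀ y, f xs ≤ f y) (hfxs : f xs = 0) :
    ∀ A : Set (EuclideanSpace ℝ (Fin d)), MeasurableSet A →
      volume.withDensity (fun x =>
          ENNReal.ofReal ((L / (2 * Real.pi)) ^ ((d : ℝ) / 2)
            * Real.exp (-(L / 2) * ‖x - xs‖ ^ 2))) A
        ≤ ENNReal.ofReal ((L / m) ^ ((d : ℝ) / 2)) *
          volume.withDensity (fun x =>
            ENNReal.ofReal (Real.exp (-f x)
              / ∫ y : EuclideanSpace ℝ (Fin d), Real.exp (-f y))) A := by
  intro A _
  have hL : 0 < L := hm.trans_le hmL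
  have hgrad : gradient f xs = 0 := IsLocalMin.gradient_eq_zero (.of_forall hmin)
  have hlo (y) : m / 2 * ‖y - xs‖ ^ 2 ≤ f y := by
    simpa [hgrad, hfxs, norm_sub_rev xs y] using hsc xs y
  have hup (y) : f y ≤ L / 2 * ‖y - xs‖ ^ 2 := by
    simpa [hgrad, hfxs, norm_sub_rev xs y] using hsmooth xs y
  have hdensity := gaussian_density_le_mul_density_of_quadratic_bounds hm hL
    hdiff.continuous.aestronglyMeasurable hlo hup
  rw [finrank_euclideanSpace_fin] at hdensity
  exact withDensity_ofReal_le_ofReal_mul (by positivity) hdensity A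
end

section
/- Let f : ℝ^d → ℝ be m-strongly convex and L-smooth with minimizer x* and f(x*) = 0, and suppose ‖x̃ − x*‖ ≤ ε and L̃ ≥ L. Then the Gaussian distribution μ̃ = N(x̃, (2L̃)^{−1} I_d) is β̃-warm with respect to π ∝ e^{−f}, with β̃ = exp((d/2) log(2κ L̃/L) + L̃ ε²), where κ = L/m; i.e., μ̃(A) ≤ β̃ Π(A) for every measurable A. -/
open MeasureTheory Real
open scoped RealInnerProductSpace

/-! Since `∇f(x*) = 0`, `f` lies between `(m/2)‖x - x*‖²` and `(L/2)‖x - x*‖²`. Hence the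
normalising constant is at most `(2π/m)^{d/2}` and the target density satisfies
`π(x) ≥ (m/(2π))^{d/2} e^{-(L/2)‖x - x*‖²}`. On the other side,
`‖x - x̃‖² ≥ ½‖x - x*‖² - ‖x̃ - x*‖²` bounds the Gaussian density by
`(L̃/π)^{d/2} e^{L̃ε²} e^{-(L/2)‖x - x*‖²}`, and the ratio of the two bounds is `β̃`. -/

lemma exp_neg_mul_sq_norm_sub_le {F : Type*} [SeminormedAddCommGroup F] {a : ℝ} (ha : 0 ≤ a)
    (x y z : F) :
    exp (-a * ‖x - y‖ ^ 2) ≤ exp (a * ‖y - z‖ ^ 2) * exp (-(a / 2) * ‖x - z‖ ^ 2) := by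
  rw [← exp_add, exp_le_exp]
  have htri : ‖x - z‖ ^ 2 ≤ 2 * (‖x - y‖ ^ 2 + ‖y - z‖ ^ 2) :=
    (pow_le_pow_left₀ (norm_nonneg _) (norm_sub_le_norm_sub_add_norm_sub x y z) 2).trans
      add_sq_le
  nlinarith

lemma withDensity_ofReal_le_smul {α : Type*} [MeasurableSpace α] {μ : Measure α}
    {p q : α → ℝ} {C : ℝ} (hC : 0 ≤ C) (h : ∀ x, p x ≤ C * q x) :
    μ.withDensity (fun x => ENNReal.ofReal (p x))
      ≤ ENNReal.ofReal C • μ.withDensity (fun x => ENNReal.ofReal (q x)) := by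
  rw [← withDensity_smul' _ _ ENNReal.ofReal_ne_top]
  refine withDensity_mono (ae_of_all _ fun x => ?_)
  simpa [← ENNReal.ofReal_mul hC] using ENNReal.ofReal_le_ofReal (h x)

section Gaussian

variable {E : Type*} [NormedAddCommGroup E] [InnerProductSpace ℝ E] [FiniteDimensional ℝ E]
  [MeasurableSpace E] [BorelSpace E]

lemma integrable_exp_neg_mul_sq_norm_sub {b : ℝ} (hb : 0 < b) (c : E) :
    Integrable fun x : E => exp (-b * ‖x - c‖ ^ 2) := by
  have h := (GaussianFourier.integrable_cexp_neg_mul_sq_norm_add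
    (V := E) (b := (b : ℂ)) (by simpa) 0 0).norm
  refine (h.congr (g := fun x : E => exp (-b * ‖x‖ ^ 2)) (ae_of_all _ fun x => ?_)).comp_sub_right
    c
  simp [Complex.norm_exp, ← Complex.ofReal_pow]

lemma integral_exp_neg_mul_sq_norm_sub {b : ℝ} (hb : 0 < b) (c : E) :
    ∫ x : E, exp (-b * ‖x - c‖ ^ 2) = (π / b) ^ ((Module.finrank ℝ E : ℝ) / 2) := by
  rw [integral_sub_right_eq_self (fun x : E => exp (-b * ‖x‖ ^ 2)) c,
    GaussianFourier.integral_rexp_neg_mul_sq_norm hb]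

variable {f : E → ℝ} {x₀ : E} {b : ℝ}

lemma integrable_exp_neg_of_quadratic_le_s6 (hf : Continuous f) (hb : 0 < b)
    (hlow : ∀ x, b * ‖x - x₀‖ ^ 2 ≤ f x) :
    Integrable fun x => exp (-f x) := by
  refine (integrable_exp_neg_mul_sq_norm_sub hb x₀).mono'
    (continuous_exp.comp hf.neg).aestronglyMeasurable (ae_of_all _ fun x => ?_)
  rw [norm_of_nonneg (exp_pos _).le, exp_le_exp]
  linarith [hlow x]

lemma integral_exp_neg_le_of_quadratic_le_s6 (hf : Continuous f) (hb : 0 < b)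
    (hlow : ∀ x, b * ‖x - x₀‖ ^ 2 ≤ f x) :
    ∫ x, exp (-f x) ≤ (π / b) ^ ((Module.finrank ℝ E : ℝ) / 2) := by
  rw [← integral_exp_neg_mul_sq_norm_sub hb x₀]
  refine integral_mono (integrable_exp_neg_of_quadratic_le_s6 hf hb hlow)
    (integrable_exp_neg_mul_sq_norm_sub hb x₀) fun x => ?_
  simp only [exp_le_exp]
  linarith [hlow x]

lemma gaussian_le_normalized_exp_neg (hf : Continuous f) (hb : 0 < b)
    (hlow : ∀ x, b * ‖x - x₀‖ ^ 2 ≤ f x) {B : ℝ} (hup : ∀ x, f x ≤ B * ‖x - x₀‖ ^ 2) (x : E) :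
    (b / π) ^ ((Module.finrank ℝ E : ℝ) / 2) * exp (-B * ‖x - x₀‖ ^ 2)
      ≤ exp (-f x) / ∫ y, exp (-f y) := by
  have hZ := integral_exp_pos (μ := volume) (integrable_exp_neg_of_quadratic_le_s6 hf hb hlow)
  rw [le_div_iff₀ hZ]
  calc (b / π) ^ ((Module.finrank ℝ E : ℝ) / 2) * exp (-B * ‖x - x₀‖ ^ 2) * ∫ y, exp (-f y)
      ≤ (b / π) ^ ((Module.finrank ℝ E : ℝ) / 2) * exp (-f x)
          * (π / b) ^ ((Module.finrank ℝ E : ℝ) / 2) := by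
        gcongr
        · linarith [hup x]
        · exact integral_exp_neg_le_of_quadratic_le_s6 hf hb hlow
    _ = exp (-f x) := by
        rw [mul_right_comm, ← mul_rpow (by positivity) (by positivity),
          show b / π * (π / b) = 1 by field_simp, one_rpow, one_mul]

end Gaussian

theorem inexact_start_warmness_general (d : ℕ) (f : EuclideanSpace ℝ (Fin d) → ℝ)
    (m L Lt ε : ℝ) (hm : 0 < m) (hmL : m ≤ L) (hLt : L ≤ Lt)
    (hdiff : Differentiable ℝ f)
    (hsc : ∀ x y : EuclideanSpace ℝ (Fin d),
      f x + ⟪gradient f x, y - x⟫ + m / 2 * ‖x - y‖ ^ 2 ≤ f y)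
    (hsmooth : ∀ x y : EuclideanSpace ℝ (Fin d),
      f y ≤ f x + ⟪gradient f x, y - x⟫ + L / 2 * ‖x - y‖ ^ 2)
    (xs xt : EuclideanSpace ℝ (Fin d))
    (hmin : ∀ y, f xs ≤ f y) (hfxs : f xs = 0)
    (hclose : ‖xt - xs‖ ≤ ε) :
    ∀ A : Set (EuclideanSpace ℝ (Fin d)), MeasurableSet A →
      volume.withDensity (fun x =>
          ENNReal.ofReal ((Lt / Real.pi) ^ ((d : ℝ) / 2) * Real.exp (-Lt * ‖x - xt‖ ^ 2))) A
        ≤ ENNReal.ofReal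
            (Real.exp ((d : ℝ) / 2 * Real.log (2 * (L / m) * Lt / L) + Lt * ε ^ 2)) *
          volume.withDensity (fun x =>
            ENNReal.ofReal (Real.exp (-f x)
              / ∫ y : EuclideanSpace ℝ (Fin d), Real.exp (-f y))) A := by
  have hL : 0 < L := hm.trans_le hmL
  have hLt0 : 0 < Lt := hL.trans_le hLt
  have hg : gradient f xs = 0 := by
    simp [gradient, IsLocalMin.fderiv_eq_zero (Filter.Eventually.of_forall hmin)]
  have hlow : ∀ x, m / 2 * ‖x - xs‖ ^ 2 ≤ f x := fun x => by
    simpa [hg, hfxs, norm_sub_rev] using hsc xs x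
  have hup : ∀ x, f x ≤ L / 2 * ‖x - xs‖ ^ 2 := fun x => by
    simpa [hg, hfxs, norm_sub_rev] using hsmooth xs x
  have hβ : exp ((d : ℝ) / 2 * log (2 * (L / m) * Lt / L) + Lt * ε ^ 2)
      = (2 * Lt / m) ^ ((d : ℝ) / 2) * exp (Lt * ε ^ 2) := by
    rw [exp_add, show 2 * (L / m) * Lt / L = 2 * Lt / m by field_simp,
      rpow_def_of_pos (by positivity), mul_comm (log _)]
  intro A _
  refine Measure.le_iff'.1 (withDensity_ofReal_le_smul (exp_pos _).le fun x => ?_) A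
  have hπ := gaussian_le_normalized_exp_neg hdiff.continuous (by positivity) hlow hup x
  rw [finrank_euclideanSpace_fin] at hπ
  calc (Lt / π) ^ ((d : ℝ) / 2) * exp (-Lt * ‖x - xt‖ ^ 2)
      ≤ (Lt / π) ^ ((d : ℝ) / 2) * (exp (Lt * ε ^ 2) * exp (-(L / 2) * ‖x - xs‖ ^ 2)) := by
        gcongr
        refine (exp_neg_mul_sq_norm_sub_le hLt0.le x xt xs).trans ?_
        gcongr
    _ = (2 * Lt / m) ^ ((d : ℝ) / 2) * exp (Lt * ε ^ 2)
          * ((m / 2 / π) ^ ((d : ℝ) / 2) * exp (-(L / 2) * ‖x - xs‖ ^ 2)) := by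
        rw [show Lt / π = 2 * Lt / m * (m / 2 / π) by field_simp,
          mul_rpow (by positivity) (by positivity)]
        ring
    _ ≤ _ := by
        rw [← hβ]
        exact mul_le_mul_of_nonneg_left hπ (exp_pos _).le

/-- If `f` is `m`-strongly convex and `L`-smooth with minimizer `x*`, `f(x*) = 0`,
`‖x̃ - x*‖ ≤ ε` and `L̃ ≥ L`, then `μ̃ = N(x̃, (2L̃)⁻¹ I_d)` is `β̃`-warm with respect to
`Π ∝ e^{-f}`, where `β̃ = exp((d/2) log(2 κ L̃ / L) + L̃ ε²)` and `κ = L/m`. -/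
theorem inexact_start_warmness (d : ℕ) (f : EuclideanSpace ℝ (Fin d) → ℝ)
    (m L Lt ε : ℝ) (hm : 0 < m) (hmL : m ≤ L) (hLt : L ≤ Lt) (hε : 0 ≤ ε)
    (hdiff : Differentiable ℝ f)
    (hsc : ∀ x y : EuclideanSpace ℝ (Fin d),
      f x + ⟪gradient f x, y - x⟫ + m / 2 * ‖x - y‖ ^ 2 ≤ f y)
    (hsmooth : ∀ x y : EuclideanSpace ℝ (Fin d),
      f y ≤ f x + ⟪gradient f x, y - x⟫ + L / 2 * ‖x - y‖ ^ 2)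
    (xs xt : EuclideanSpace ℝ (Fin d))
    (hmin : ∀ y, f xs ≤ f y) (hfxs : f xs = 0)
    (hclose : ‖xt - xs‖ ≤ ε) :
    ∀ A : Set (EuclideanSpace ℝ (Fin d)), MeasurableSet A →
      volume.withDensity (fun x =>
          ENNReal.ofReal ((Lt / Real.pi) ^ ((d : ℝ) / 2) * Real.exp (-Lt * ‖x - xt‖ ^ 2))) A
        ≤ ENNReal.ofReal
            (Real.exp ((d : ℝ) / 2 * Real.log (2 * (L / m) * Lt / L) + Lt * ε ^ 2)) *
          volume.withDensity (fun x =>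
            ENNReal.ofReal (Real.exp (-f x)
              / ∫ y : EuclideanSpace ℝ (Fin d), Real.exp (-f y))) A :=
  inexact_start_warmness_general d f m L Lt ε hm hmL hLt hdiff hsc hsmooth xs xt hmin hfxs hclose
end

section
/- Let f : ℝ^d → ℝ be m-strongly convex and L-smooth, and let π ∝ e^{−f}. For the MALA proposal density p_x(z) ∝ exp(−‖z − x + h∇f(x)‖²/(4h)), the acceptance ratio satisfies, for all x, z ∈ ℝ^d: (π(z)p_z(x)) / (π(x)p_x(z)) ≥ exp( −(1/4)(L − m)‖x − z‖² − (h/4)(2L‖x−z‖‖∇f(x)‖ + L²‖x−z‖²) ). -/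
open MeasureTheory
open scoped RealInnerProductSpace

/-!
The logarithm of the acceptance ratio is
`((f x - f z + ⟪∇f x, z - x⟫) + (f x - f z - ⟪∇f z, x - z⟫)) / 2
  + h / 4 * (‖∇f x‖² - ‖∇f z‖²)`.
Smoothness bounds the first bracket below by `-L/2 ‖x - z‖²`, strong convexity the second by
`m/2 ‖x - z‖²`, and co-coercivity of the gradient of a convex `L`-smooth function gives
`‖∇f z - ∇f x‖ ≤ L ‖x - z‖`, hence `‖∇f z‖ ≤ ‖∇f x‖ + L ‖x - z‖`. The normalising
constant `∫ e^{-f}` cancels, but only because it is nonzero: strong convexity gives `e^{-f}`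
Gaussian decay.
-/

section Integrability

variable {V : Type*} [NormedAddCommGroup V] [InnerProductSpace ℝ V] [FiniteDimensional ℝ V]
  [MeasurableSpace V] [BorelSpace V]

theorem integrable_exp_neg_of_quadratic_growth {f : V → ℝ} (hf : Continuous f) {b c : ℝ}
    (hb : 0 < b) (hgrowth : ∀ y, b * ‖y‖ ^ 2 - c ≤ f y) :
    Integrable fun y ↦ Real.exp (-f y) := by
  have hgauss : Integrable fun y : V ↦ Real.exp (-b * ‖y‖ ^ 2) := by
    simpa [Complex.norm_exp, ← Complex.ofReal_pow] using
      (GaussianFourier.integrable_cexp_neg_mul_sq_norm_add (V := V) (b := b)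
        (by simpa using hb) 0 0).norm
  refine (hgauss.const_mul (Real.exp c)).mono (by fun_prop) (.of_forall fun y ↦ ?_)
  rw [Real.norm_of_nonneg (Real.exp_pos _).le, Real.norm_of_nonneg (by positivity),
    ← Real.exp_add, Real.exp_le_exp]
  linarith [hgrowth y]

theorem integrable_exp_neg_of_strongly_convex {f : V → ℝ} {g : V → V} {m : ℝ}
    (hf : Continuous f) (hm : 0 < m)
    (hsc : ∀ x y, f x + ⟪g x, y - x⟫ + m / 2 * ‖x - y‖ ^ 2 ≤ f y) :
    Integrable fun y ↦ Real.exp (-f y) := by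
  refine integrable_exp_neg_of_quadratic_growth hf (b := m / 4) (c := ‖g 0‖ ^ 2 / m - f 0)
    (by positivity) fun y ↦ ?_
  have hsc0 := hsc 0 y
  rw [sub_zero, zero_sub, norm_neg] at hsc0
  have hcs := neg_le_of_abs_le (abs_real_inner_le_norm (g 0) y)
  have hamgm : ‖g 0‖ * ‖y‖ ≤ ‖g 0‖ ^ 2 / m + m / 4 * ‖y‖ ^ 2 := by
    rw [div_add' _ _ _ hm.ne', le_div_iff₀ hm]
    nlinarith [sq_nonneg (‖g 0‖ - m / 2 * ‖y‖)]
  linarith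

end Integrability

section SmoothConvex

variable {V : Type*} [NormedAddCommGroup V] [InnerProductSpace ℝ V] {f : V → ℝ} {g : V → V}
  {L : ℝ}

theorem add_inner_add_norm_sub_sq_div_le (hL : 0 < L)
    (hconv : ∀ x y, f x + ⟪g x, y - x⟫ ≤ f y)
    (hsmooth : ∀ x y, f y ≤ f x + ⟪g x, y - x⟫ + L / 2 * ‖x - y‖ ^ 2) (x z : V) :
    f x + ⟪g x, z - x⟫ + ‖g z - g x‖ ^ 2 / (2 * L) ≤ f z := by
  -- `w` minimises the smoothness upper bound at `z` for `y ↦ f y - ⟪g x, y⟫`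
  set w := z - L⁻¹ • (g z - g x) with hw
  have hlow := hconv x w
  have hup := hsmooth z w
  have hwx : w - x = (z - x) - L⁻¹ • (g z - g x) := by rw [hw]; abel
  have hwz : w - z = -(L⁻¹ • (g z - g x)) := by rw [hw]; abel
  have hzw : z - w = L⁻¹ • (g z - g x) := by rw [hw]; abel
  have hquad : L / 2 * (L⁻¹ * ‖g z - g x‖) ^ 2 = ‖g z - g x‖ ^ 2 / (2 * L) := by
    field_simp
  have hlin : L⁻¹ * ⟪g z, g z - g x⟫ - L⁻¹ * ⟪g x, g z - g x⟫
      = 2 * (‖g z - g x‖ ^ 2 / (2 * L)) := by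
    rw [← mul_sub, ← inner_sub_left, real_inner_self_eq_norm_sq]
    field_simp
  rw [hwx, inner_sub_right, real_inner_smul_right] at hlow
  rw [hwz, hzw, inner_neg_right, real_inner_smul_right, norm_smul,
    Real.norm_of_nonneg (inv_nonneg.2 hL.le), hquad] at hup
  linarith

theorem norm_sub_le_of_convex_of_smooth (hL : 0 < L)
    (hconv : ∀ x y, f x + ⟪g x, y - x⟫ ≤ f y)
    (hsmooth : ∀ x y, f y ≤ f x + ⟪g x, y - x⟫ + L / 2 * ‖x - y‖ ^ 2) (x z : V) :
    ‖g z - g x‖ ≤ L * ‖x - z‖ := by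
  have hle : ‖g z - g x‖ ^ 2 / (2 * L) ≤ L / 2 * ‖x - z‖ ^ 2 := by
    linarith [add_inner_add_norm_sub_sq_div_le hL hconv hsmooth x z, hsmooth x z]
  rw [div_le_iff₀ (by positivity)] at hle
  refine (pow_le_pow_iff_left₀ (norm_nonneg _) (by positivity) two_ne_zero).1 ?_
  linarith

end SmoothConvex

theorem sq_norm_le_of_norm_sub_le {E : Type*} [SeminormedAddCommGroup E] {a b : E} {r : ℝ}
    (h : ‖b - a‖ ≤ r) : ‖b‖ ^ 2 ≤ ‖a‖ ^ 2 + 2 * r * ‖a‖ + r ^ 2 := by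
  have hb : ‖b‖ ≤ ‖a‖ + r := (norm_le_norm_add_norm_sub' b a).trans (by gcongr)
  calc ‖b‖ ^ 2 ≤ (‖a‖ + r) ^ 2 := by gcongr
    _ = ‖a‖ ^ 2 + 2 * r * ‖a‖ + r ^ 2 := by ring

section MALA

variable {V : Type*} [NormedAddCommGroup V] [InnerProductSpace ℝ V] {f : V → ℝ} {g : V → V}

theorem mala_log_ratio_eq {h : ℝ} (hh : h ≠ 0) (x z : V) :
    (-f z + -‖x - (z - h • g z)‖ ^ 2 / (4 * h))
        - (-f x + -‖z - (x - h • g x)‖ ^ 2 / (4 * h))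
      = ((f x - f z + ⟪g x, z - x⟫) + (f x - f z - ⟪g z, x - z⟫)) / 2
        + h / 4 * (‖g x‖ ^ 2 - ‖g z‖ ^ 2) := by
  have hzx : z - (x - h • g x) = (z - x) + h • g x := by abel
  have hxz : x - (z - h • g z) = (x - z) + h • g z := by abel
  rw [hzx, hxz, norm_add_sq_real, norm_add_sq_real, norm_smul, norm_smul, real_inner_smul_right,
    real_inner_smul_right, real_inner_comm (g x), real_inner_comm (g z), norm_sub_rev z x,
    Real.norm_eq_abs, mul_pow, mul_pow, sq_abs]
  field_simp
  ring

theorem mala_log_ratio_ge {m L h : ℝ} (hm : 0 ≤ m) (hL : 0 < L) (hh : 0 < h)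
    (hsc : ∀ x y, f x + ⟪g x, y - x⟫ + m / 2 * ‖x - y‖ ^ 2 ≤ f y)
    (hsmooth : ∀ x y, f y ≤ f x + ⟪g x, y - x⟫ + L / 2 * ‖x - y‖ ^ 2) (x z : V) :
    -(1 / 4) * (L - m) * ‖x - z‖ ^ 2
        - h / 4 * (2 * L * ‖x - z‖ * ‖g x‖ + L ^ 2 * ‖x - z‖ ^ 2)
      ≤ (-f z + -‖x - (z - h • g z)‖ ^ 2 / (4 * h))
        - (-f x + -‖z - (x - h • g x)‖ ^ 2 / (4 * h)) := by
  have hconv : ∀ x y, f x + ⟪g x, y - x⟫ ≤ f y := fun x y ↦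
    (le_add_of_nonneg_right (by positivity)).trans (hsc x y)
  have hgrad :
      ‖g z‖ ^ 2 ≤ ‖g x‖ ^ 2 + 2 * (L * ‖x - z‖) * ‖g x‖ + (L * ‖x - z‖) ^ 2 :=
    sq_norm_le_of_norm_sub_le (norm_sub_le_of_convex_of_smooth hL hconv hsmooth x z)
  have hupper := hsmooth x z
  have hlower := hsc z x
  rw [norm_sub_rev z x] at hlower
  rw [mala_log_ratio_eq hh.ne']
  nlinarith

end MALA

/-- For `f` `m`-strongly convex and `L`-smooth, `π ∝ e^{-f}` and the MALA
proposal density `p_x(z) ∝ exp(-‖z - x + h∇f(x)‖²/(4h))`, the acceptance ratio satisfies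
`(π(z) p_z(x)) / (π(x) p_x(z))
  ≥ exp(-(1/4)(L - m)‖x - z‖² - (h/4)(2L‖x - z‖‖∇f(x)‖ + L²‖x - z‖²))`. -/
theorem mala_accept_ratio_lower_bound (d : ℕ) (f : EuclideanSpace ℝ (Fin d) → ℝ)
    (m L h : ℝ) (hm : 0 < m) (hmL : m ≤ L) (hh : 0 < h)
    (hdiff : Differentiable ℝ f)
    (hsc : ∀ x y : EuclideanSpace ℝ (Fin d),
      f x + ⟪gradient f x, y - x⟫ + m / 2 * ‖x - y‖ ^ 2 ≤ f y)
    (hsmooth : ∀ x y : EuclideanSpace ℝ (Fin d),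
      f y ≤ f x + ⟪gradient f x, y - x⟫ + L / 2 * ‖x - y‖ ^ 2) :
    ∀ x z : EuclideanSpace ℝ (Fin d),
      ((Real.exp (-f z) / ∫ y : EuclideanSpace ℝ (Fin d), Real.exp (-f y)) *
            ((4 * Real.pi * h) ^ (-(d : ℝ) / 2) *
              Real.exp (-‖x - (z - h • gradient f z)‖ ^ 2 / (4 * h)))) /
          ((Real.exp (-f x) / ∫ y : EuclideanSpace ℝ (Fin d), Real.exp (-f y)) *
            ((4 * Real.pi * h) ^ (-(d : ℝ) / 2) *
              Real.exp (-‖z - (x - h • gradient f x)‖ ^ 2 / (4 * h))))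
        ≥ Real.exp (-(1 / 4) * (L - m) * ‖x - z‖ ^ 2
            - h / 4 * (2 * L * ‖x - z‖ * ‖gradient f x‖ + L ^ 2 * ‖x - z‖ ^ 2)) := by
  intro x z
  set Z := ∫ y, Real.exp (-f y)
  set C := (4 * Real.pi * h) ^ (-(d : ℝ) / 2)
  have hZ : Z ≠ 0 :=
    (integral_exp_pos (integrable_exp_neg_of_strongly_convex hdiff.continuous hm hsc)).ne'
  have hC : C ≠ 0 := (Real.rpow_pos_of_pos (by positivity) _).ne'
  have hratio : ∀ a b c e : ℝ,
      Real.exp a / Z * (C * Real.exp b) / (Real.exp c / Z * (C * Real.exp e))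
      = Real.exp ((a + b) - (c + e)) := by
    intro a b c e
    rw [Real.exp_sub, Real.exp_add, Real.exp_add]
    field_simp
  rw [ge_iff_le, hratio, Real.exp_le_exp]
  exact mala_log_ratio_ge hm.le (hm.trans_le hmL) hh hsc hsmooth x z
end
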